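/- arXiv:2510.03845 — 5 statements merged into one kernel-verified Lean document; each statement's English description precedes it below -/
import Mathlib

section
/- Let N, T, K ∈ ℕ and B ≥ 0. Let J_1,…,J_K be a partition of [T], let S_1,…,S_K ⊆ [N], let ℓ_1,…,ℓ_T ∈ ℝ^N, and let x_1,…,x_T ∈ Δ_N be such that for every k ∈ [K] and t ∈ J_k, the support of x_t is contained in S_k. Suppose that for every k ∈ [K]: (i) ∑_{i∈S_k} max_{i'∈S_k} ∑_{t∈J_k} x_t(i)·(ℓ_t(i') − ℓ_t(i)) ≤ B, and (ii) for every i ∈ S_k there exists j ∈ S_k with ∑_{t∈J_k} x_t(i)·ℓ_t(j) = max_{n∈[N]} ∑_{t∈J_k} x_t(i)·ℓ_t(n). Then for every map σ : [N] → [N], ∑_{t=1}^T ∑_{i=1}^N x_t(i)·(ℓ_t(σ(i)) − ℓ_t(i)) ≤ K·B. (Swap regret bound for the restart-based hidden-game algorithm: the swap regret over the full action set is at most the number of restart phases times the per-phase restricted swap regret.) -/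
/-- Swap regret bound for the restart-based hidden-game algorithm: if the time
horizon `[T]` is partitioned into `K` phases `J k`, the play in phase `k` is
supported on `S k`, the restricted swap regret in each phase is at most `B`,
and weighted best responses over `[N]` lie inside `S k`, then the swap regret
over the full action set is at most `K * B`. -/
theorem stmt_2 (N T K : ℕ) (B : ℝ) (hB : 0 ≤ B)
    (J : Fin K → Finset (Fin T))
    (hdisj : ∀ k k' : Fin K, k ≠ k' → Disjoint (J k) (J k'))
    (hcover : ∀ t : Fin T, ∃ k, t ∈ J k)
    (S : Fin K → Finset (Fin N))
    (ℓ : Fin T → Fin N → ℝ)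
    (x : Fin T → Fin N → ℝ)
    (hx : ∀ t, x t ∈ stdSimplex ℝ (Fin N))
    (hsupp : ∀ k : Fin K, ∀ t ∈ J k, ∀ i ∉ S k, x t i = 0)
    (hswap : ∀ k : Fin K,
      ∑ i ∈ S k, (⨆ i' : {i' // i' ∈ S k}, ∑ t ∈ J k, x t i * (ℓ t (i' : Fin N) - ℓ t i)) ≤ B)
    (hBR : ∀ k : Fin K, ∀ i ∈ S k, ∃ j ∈ S k,
      ∑ t ∈ J k, x t i * ℓ t j = ⨆ n : Fin N, ∑ t ∈ J k, x t i * ℓ t n) :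
    ∀ σ : Fin N → Fin N,
      ∑ t, ∑ i, x t i * (ℓ t (σ i) - ℓ t i) ≤ (K : ℝ) * B := by
  intro σ
  -- decompose time into phases
  have hunion : (Finset.univ : Finset (Fin T)) = Finset.univ.biUnion J := by
    ext t
    simp only [Finset.mem_univ, Finset.mem_biUnion, true_iff, true_and]
    exact hcover t
  have hsplit : ∑ t, ∑ i, x t i * (ℓ t (σ i) - ℓ t i)
      = ∑ k : Fin K, ∑ t ∈ J k, ∑ i, x t i * (ℓ t (σ i) - ℓ t i) := by
    rw [hunion, Finset.sum_biUnion]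
    intro k _ k' _ hkk'
    exact hdisj k k' hkk'
  rw [hsplit]
  have hphase : ∀ k : Fin K,
      ∑ t ∈ J k, ∑ i, x t i * (ℓ t (σ i) - ℓ t i) ≤ B := by
    intro k
    have hre : ∑ t ∈ J k, ∑ i, x t i * (ℓ t (σ i) - ℓ t i)
        = ∑ i ∈ S k, ∑ t ∈ J k, x t i * (ℓ t (σ i) - ℓ t i) := by
      rw [Finset.sum_comm]
      rw [← Finset.sum_subset (Finset.subset_univ (S k))]
      intro i _ hi
      refine Finset.sum_eq_zero fun t ht => ?_
      rw [hsupp k t ht i hi, zero_mul]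
    rw [hre]
    refine le_trans (Finset.sum_le_sum fun i hi => ?_) (hswap k)
    obtain ⟨j, hj, hje⟩ := hBR k i hi
    have h1 : ∑ t ∈ J k, x t i * ℓ t (σ i) ≤ ∑ t ∈ J k, x t i * ℓ t j := by
      rw [hje]
      exact le_ciSup (f := fun n : Fin N => ∑ t ∈ J k, x t i * ℓ t n) (Finite.bddAbove_range _) (σ i)
    have h2 : ∑ t ∈ J k, x t i * (ℓ t j - ℓ t i)
        ≤ ⨆ i' : {i' // i' ∈ S k}, ∑ t ∈ J k, x t i * (ℓ t (i' : Fin N) - ℓ t i) := by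
      exact le_ciSup (f := fun i' : {i' // i' ∈ S k} => ∑ t ∈ J k, x t i * (ℓ t (i' : Fin N) - ℓ t i)) (Finite.bddAbove_range _) ⟨j, hj⟩
    calc ∑ t ∈ J k, x t i * (ℓ t (σ i) - ℓ t i)
        = ∑ t ∈ J k, x t i * ℓ t (σ i) - ∑ t ∈ J k, x t i * ℓ t i := by
          rw [← Finset.sum_sub_distrib]; congr 1; ext t; ring
      _ ≤ ∑ t ∈ J k, x t i * ℓ t j - ∑ t ∈ J k, x t i * ℓ t i := by linarith
      _ = ∑ t ∈ J k, x t i * (ℓ t j - ℓ t i) := by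
          rw [← Finset.sum_sub_distrib]; congr 1; ext t; ring
      _ ≤ _ := h2
  calc ∑ k : Fin K, ∑ t ∈ J k, ∑ i, x t i * (ℓ t (σ i) - ℓ t i)
      ≤ ∑ _k : Fin K, B := Finset.sum_le_sum fun k _ => hphase k
    _ = (K : ℝ) * B := by simp [mul_comm]
end

section
/- Let N, T ∈ ℕ. For each t ∈ [T], let x_t ∈ Δ_N, let ℓ_t ∈ ℝ^N with 0 ≤ ℓ_t(i) ≤ 1 for all i, let Q_t ∈ ℝ^{N×N} be row-stochastic with rows q_t^1,…,q_t^N ∈ Δ_N (so (Q_t)(s,j) = q_t^s(j)), and let ε_t ≥ 0 satisfy |x_tᵀQ_tℓ_t − x_t·ℓ_t| ≤ ε_t. Then for every map σ : [N] → [N], ∑_{t=1}^T ∑_{i=1}^N x_t(i)·ℓ_t(σ(i)) − ∑_{t=1}^T x_t·ℓ_t ≤ ∑_{i=1}^N max_{k∈[N]} ∑_{t=1}^T x_t(i)·(ℓ_t(k) − q_t^i·ℓ_t) + ∑_{t=1}^T ε_t. (Blum–Mansour-style reduction with approximate fixed points: the swap regret of the stationary plays is bounded by the sum of the weighted external regrets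 of the per-action copies plus the cumulative fixed-point error.) -/
/-- Blum–Mansour-style reduction with approximate fixed points: if at each
round `t` the play `x t` is an `ε t`-approximate fixed point of the stochastic
matrix `Q t` whose rows are the distributions `q t s`, then the swap regret of
the plays is bounded by the sum over actions of the weighted external regrets
of the per-action copies plus the cumulative fixed-point error. -/
theorem stmt_8 (N T : ℕ)
    (x : Fin T → Fin N → ℝ) (hx : ∀ t, x t ∈ stdSimplex ℝ (Fin N))
    (ℓ : Fin T → Fin N → ℝ) (hℓ : ∀ t i, 0 ≤ ℓ t i ∧ ℓ t i ≤ 1)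
    (q : Fin T → Fin N → Fin N → ℝ) (hq : ∀ t s, q t s ∈ stdSimplex ℝ (Fin N))
    (ε : Fin T → ℝ) (hε : ∀ t, 0 ≤ ε t)
    (hfix : ∀ t, |(∑ s, x t s * ∑ j, q t s j * ℓ t j) - ∑ i, x t i * ℓ t i| ≤ ε t) :
    ∀ σ : Fin N → Fin N,
      (∑ t, ∑ i, x t i * ℓ t (σ i)) - ∑ t, ∑ i, x t i * ℓ t i
        ≤ (∑ i, ⨆ k : Fin N, ∑ t, x t i * (ℓ t k - ∑ j, q t i j * ℓ t j))
          + ∑ t, ε t := by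
  intro σ
  have key1 : (∑ t, ∑ i, x t i * ℓ t (σ i))
      - ∑ t, ∑ i, x t i * (∑ j, q t i j * ℓ t j)
      ≤ ∑ i, ⨆ k : Fin N, ∑ t, x t i * (ℓ t k - ∑ j, q t i j * ℓ t j) := by
    have h1 : (∑ t, ∑ i, x t i * ℓ t (σ i))
        - ∑ t, ∑ i, x t i * (∑ j, q t i j * ℓ t j)
        = ∑ i, ∑ t, x t i * (ℓ t (σ i) - ∑ j, q t i j * ℓ t j) := by
      rw [Finset.sum_comm, Finset.sum_comm (f := fun t i => x t i * (∑ j, q t i j * ℓ t j)),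
        ← Finset.sum_sub_distrib]
      congr 1; ext i
      rw [← Finset.sum_sub_distrib]
      congr 1; ext t; ring
    rw [h1]
    apply Finset.sum_le_sum
    intro i _
    exact le_ciSup (f := fun k => ∑ t, x t i * (ℓ t k - ∑ j, q t i j * ℓ t j)) (Set.Finite.bddAbove (Set.finite_range _)) (σ i)
  have key2 : (∑ t, ∑ i, x t i * (∑ j, q t i j * ℓ t j))
      - ∑ t, ∑ i, x t i * ℓ t i ≤ ∑ t, ε t := by
    rw [← Finset.sum_sub_distrib]
    apply Finset.sum_le_sum
    intro t _
    have := (abs_le.mp (hfix t)).2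
    linarith
  linarith
end

section
/- Let N, T ∈ ℕ with N ≥ 1, and let R_B, R_E ≥ 0. For each t ∈ [T], let ℓ_t ∈ ℝ^N with 0 ≤ ℓ_t(i) ≤ 1 for all i, let x_t ∈ Δ_N, let n_t ∈ [N], let β_t ∈ Δ_2, let Q_t ∈ ℝ^{N×N} be row-stochastic, and let ε_t ≥ 0. Define v_t(1) = ℓ_t(n_t) and v_t(2) = x_tᵀQ_tℓ_t. Suppose: (a) |β_t(1)·v_t(1) + β_t(2)·v_t(2) − x_t·ℓ_t| ≤ ε_t for all t; (b) ∑_{t=1}^T (β_t(1)·v_t(1) + β_t(2)·v_t(2)) ≥ ∑_{t=1}^T v_t(1) − R_B (the master's external regret guarantee against the first expert); and (c) max_{n∈[N]} ∑_{t=1}^T ℓ_t(n) − ∑_{t=1}^T ℓ_t(n_t) ≤ R_E (the full-space learner's external regret guarantee). Then max_{n∈[N]} ∑_{t=1}^T ℓ_t(n) − ∑_{t=1}^T x_t·ℓ_t ≤ R_E + R_B + ∑_{t=1}^T ε_t. (External regret part of the combined simultaneous-regret theorem.) -/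
/-- External regret part of the combined simultaneous-regret theorem: if the
play `x t` is an `ε t`-approximate fixed point of the combined matrix (so the
realized payoff `x t ⬝ ℓ t` is `ε t`-close to the master's mixture of the two
expert payoffs), the master has external regret at most `R_B` against its
first expert, and the full-space learner has external regret at most `R_E`,
then the external regret of the plays is at most `R_E + R_B + ∑ t, ε t`. -/
theorem stmt_9 (N T : ℕ) (hN : 1 ≤ N) (RB RE : ℝ) (hRB : 0 ≤ RB) (hRE : 0 ≤ RE)
    (ℓ : Fin T → Fin N → ℝ) (hℓ : ∀ t i, 0 ≤ ℓ t i ∧ ℓ t i ≤ 1)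
    (x : Fin T → Fin N → ℝ) (hx : ∀ t, x t ∈ stdSimplex ℝ (Fin N))
    (n : Fin T → Fin N)
    (β : Fin T → Fin 2 → ℝ) (hβ : ∀ t, β t ∈ stdSimplex ℝ (Fin 2))
    (Q : Fin T → Matrix (Fin N) (Fin N) ℝ)
    (hQnonneg : ∀ t i j, 0 ≤ Q t i j) (hQrow : ∀ t i, ∑ j, Q t i j = 1)
    (ε : Fin T → ℝ) (hε : ∀ t, 0 ≤ ε t)
    (v : Fin T → Fin 2 → ℝ)
    (hv1 : ∀ t, v t 0 = ℓ t (n t))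
    (hv2 : ∀ t, v t 1 = ∑ i, ∑ j, x t i * Q t i j * ℓ t j)
    (hfix : ∀ t, |β t 0 * v t 0 + β t 1 * v t 1 - ∑ i, x t i * ℓ t i| ≤ ε t)
    (hmaster : ∑ t, (β t 0 * v t 0 + β t 1 * v t 1) ≥ (∑ t, v t 0) - RB)
    (hlearner : (⨆ k : Fin N, ∑ t, ℓ t k) - ∑ t, ℓ t (n t) ≤ RE) :
    (⨆ k : Fin N, ∑ t, ℓ t k) - ∑ t, ∑ i, x t i * ℓ t i ≤ RE + RB + ∑ t, ε t := by
  have h1 : ∑ t, (β t 0 * v t 0 + β t 1 * v t 1) - ∑ t, ∑ i, x t i * ℓ t i ≤ ∑ t, ε t := by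
    rw [← Finset.sum_sub_distrib]
    apply Finset.sum_le_sum
    intro t _
    exact le_trans (le_abs_self _) (hfix t)
  have h2 : ∑ t, v t 0 = ∑ t, ℓ t (n t) := by
    exact Finset.sum_congr rfl fun t _ => hv1 t
  linarith [hmaster, hlearner]
end

section
/- Let N, T, r, K ∈ ℕ with 1 ≤ K ≤ r. Let J_1,…,J_K be a partition of [T], and let S_1,…,S_K ⊆ [N] be nonempty sets with |S_k| ≤ r. Let ℓ_1,…,ℓ_T ∈ ℝ^N with 0 ≤ ℓ_t(i) ≤ 1 for all t, i. For each k and t ∈ J_k let x_t ∈ Δ_N have support contained in S_k, and for each s ∈ S_k let q_t^s ∈ Δ_N have support contained in S_k. Suppose: (i) for every k ∈ [K] and s ∈ S_k, max_{s'∈S_k} ∑_{t∈J_k} x_t(s)·(ℓ_t(s') − q_t^s·ℓ_t) ≤ √(|J_k| · log |S_k|) (per-copy external regret guarantee within phase k); and (ii) for every k ∈ [K] and s ∈ S_k there exists j ∈ S_k with ∑_{t∈J_k} x_t(s)·ℓ_t(j) = max_{n∈[N]} ∑_{t∈J_k} x_t(s)·ℓ_t(n) (best responses over [N] lie in S_k).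 Then for every map σ : [N] → [N], ∑_{t=1}^T ∑_{i=1}^N x_t(i)·ℓ_t(σ(i)) − ∑_{k=1}^K ∑_{t∈J_k} ∑_{s∈S_k} x_t(s)·(q_t^s·ℓ_t) ≤ √(r³ · T · log r), where log is the natural logarithm. (Deterministic form of the key lemma bounding the gap between the best swap deviation and the aggregate payoff of the per-action copies.) -/
/-- Deterministic form of the key lemma for hidden games: with phases `J k`,
candidate sets `S k` of size at most `r`, per-copy external regret at most
`√(|J k| * log |S k|)` within each phase, and best responses over `[N]`
attained inside `S k`, the gap between the payoff of the best swap deviation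
and the aggregate payoff of the per-action copies is at most
`√(r³ * T * log r)`. -/
theorem stmt_11 (N T r K : ℕ) (hK : 1 ≤ K) (hKr : K ≤ r)
    (J : Fin K → Finset (Fin T))
    (hdisj : ∀ k k' : Fin K, k ≠ k' → Disjoint (J k) (J k'))
    (hcover : ∀ t : Fin T, ∃ k, t ∈ J k)
    (S : Fin K → Finset (Fin N))
    (hSne : ∀ k, (S k).Nonempty) (hScard : ∀ k, (S k).card ≤ r)
    (ℓ : Fin T → Fin N → ℝ) (hℓ : ∀ t i, 0 ≤ ℓ t i ∧ ℓ t i ≤ 1)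
    (x : Fin T → Fin N → ℝ) (hx : ∀ t, x t ∈ stdSimplex ℝ (Fin N))
    (hxsupp : ∀ k : Fin K, ∀ t ∈ J k, ∀ i ∉ S k, x t i = 0)
    (q : Fin T → Fin N → Fin N → ℝ) (hq : ∀ t s, q t s ∈ stdSimplex ℝ (Fin N))
    (hqsupp : ∀ k : Fin K, ∀ t ∈ J k, ∀ s ∈ S k, ∀ j ∉ S k, q t s j = 0)
    (hcopy : ∀ k : Fin K, ∀ s ∈ S k, ∀ s' ∈ S k,
      ∑ t ∈ J k, x t s * (ℓ t s' - ∑ j, q t s j * ℓ t j)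
        ≤ Real.sqrt ((J k).card * Real.log ((S k).card)))
    (hBR : ∀ k : Fin K, ∀ s ∈ S k, ∃ j ∈ S k,
      ∑ t ∈ J k, x t s * ℓ t j = ⨆ n : Fin N, ∑ t ∈ J k, x t s * ℓ t n) :
    ∀ σ : Fin N → Fin N,
      (∑ t, ∑ i, x t i * ℓ t (σ i))
        - ∑ k, ∑ t ∈ J k, ∑ s ∈ S k, x t s * ∑ j, q t s j * ℓ t j
        ≤ Real.sqrt ((r : ℝ) ^ 3 * T * Real.log r) := by
  intro σ
  have hr1 : 1 ≤ r := le_trans hK hKr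
  have hlogr : 0 ≤ Real.log r := Real.log_nonneg (by exact_mod_cast hr1)
  have hdisj' : ∀ k ∈ (Finset.univ : Finset (Fin K)), ∀ k' ∈ Finset.univ,
      k ≠ k' → Disjoint (J k) (J k') := fun k _ k' _ h => hdisj k k' h
  have hbiUnion : (Finset.univ : Finset (Fin K)).biUnion J = Finset.univ := by
    apply Finset.eq_univ_of_forall
    intro t
    obtain ⟨k, hk⟩ := hcover t
    exact Finset.mem_biUnion.2 ⟨k, Finset.mem_univ k, hk⟩
  have hsumcard : ∑ k, ((J k).card : ℝ) = (T : ℝ) := by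
    have h := Finset.card_biUnion hdisj'
    rw [hbiUnion, Finset.card_univ, Fintype.card_fin] at h
    exact_mod_cast h.symm
  -- rewrite LHS first term over phases
  have hLHS : (∑ t, ∑ i, x t i * ℓ t (σ i))
      = ∑ k, ∑ s ∈ S k, ∑ t ∈ J k, x t s * ℓ t (σ s) := by
    rw [← hbiUnion, Finset.sum_biUnion hdisj']
    refine Finset.sum_congr rfl fun k _ => ?_
    rw [Finset.sum_comm]
    refine (Finset.sum_subset (Finset.subset_univ (S k)) ?_).symm
    intro i _ hi
    refine Finset.sum_eq_zero fun t ht => ?_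
    rw [hxsupp k t ht i hi, zero_mul]
  -- per (k,s) bound
  have hkey : ∀ k : Fin K, ∀ s ∈ S k,
      ∑ t ∈ J k, x t s * ℓ t (σ s)
        ≤ (∑ t ∈ J k, x t s * ∑ j, q t s j * ℓ t j)
          + Real.sqrt ((J k).card * Real.log ((S k).card)) := by
    intro k s hs
    obtain ⟨j, hjS, hj⟩ := hBR k s hs
    have h1 : ∑ t ∈ J k, x t s * ℓ t (σ s) ≤ ∑ t ∈ J k, x t s * ℓ t j := by
      rw [hj]
      exact le_ciSup (f := fun n : Fin N => ∑ t ∈ J k, x t s * ℓ t n)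
        (Set.Finite.bddAbove (Set.finite_range _)) (σ s)
    have h2 := hcopy k s hs j hjS
    have h3 : ∑ t ∈ J k, x t s * (ℓ t j - ∑ j', q t s j' * ℓ t j')
        = (∑ t ∈ J k, x t s * ℓ t j) - ∑ t ∈ J k, x t s * ∑ j', q t s j' * ℓ t j' := by
      rw [← Finset.sum_sub_distrib]
      exact Finset.sum_congr rfl fun t _ => by ring
    rw [h3] at h2
    linarith
  -- sum up
  have hstep : (∑ t, ∑ i, x t i * ℓ t (σ i))
      - ∑ k, ∑ t ∈ J k, ∑ s ∈ S k, x t s * ∑ j, q t s j * ℓ t j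
      ≤ ∑ k, ((S k).card : ℝ) * Real.sqrt ((J k).card * Real.log ((S k).card)) := by
    rw [hLHS]
    have hswap : ∀ k : Fin K, ∑ t ∈ J k, ∑ s ∈ S k, x t s * ∑ j, q t s j * ℓ t j
        = ∑ s ∈ S k, ∑ t ∈ J k, x t s * ∑ j, q t s j * ℓ t j :=
      fun k => Finset.sum_comm
    simp_rw [hswap]
    rw [← Finset.sum_sub_distrib]
    refine Finset.sum_le_sum fun k _ => ?_
    rw [← Finset.sum_sub_distrib]
    calc ∑ s ∈ S k, ((∑ t ∈ J k, x t s * ℓ t (σ s))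
            - ∑ t ∈ J k, x t s * ∑ j, q t s j * ℓ t j)
        ≤ ∑ s ∈ S k, Real.sqrt ((J k).card * Real.log ((S k).card)) := by
          refine Finset.sum_le_sum fun s hs => ?_
          have := hkey k s hs
          linarith
      _ = ((S k).card : ℝ) * Real.sqrt ((J k).card * Real.log ((S k).card)) := by
          rw [Finset.sum_const, nsmul_eq_mul]
  -- bound each term by r * sqrt(|J k| * log r)
  have hterm : ∀ k : Fin K, ((S k).card : ℝ) * Real.sqrt ((J k).card * Real.log ((S k).card))
      ≤ (r : ℝ) * Real.sqrt ((J k).card * Real.log r) := by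
    intro k
    have hc1 : (1 : ℝ) ≤ ((S k).card : ℝ) := by
      exact_mod_cast Finset.card_pos.2 (hSne k)
    have hcr : ((S k).card : ℝ) ≤ (r : ℝ) := by exact_mod_cast hScard k
    refine mul_le_mul hcr (Real.sqrt_le_sqrt ?_) (Real.sqrt_nonneg _) (by positivity)
    have : Real.log ((S k).card) ≤ Real.log r := Real.log_le_log (by linarith) hcr
    have hJ : (0 : ℝ) ≤ ((J k).card : ℝ) := Nat.cast_nonneg _
    nlinarith
  have hCS : ∑ k, Real.sqrt (((J k).card : ℝ) * Real.log r)
      ≤ Real.sqrt ((K : ℝ) * T * Real.log r) := by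
    have hsq := sq_sum_le_card_mul_sum_sq (s := (Finset.univ : Finset (Fin K)))
      (f := fun k => Real.sqrt (((J k).card : ℝ) * Real.log r))
    have hsq2 : ∀ k : Fin K, Real.sqrt (((J k).card : ℝ) * Real.log r) ^ 2
        = ((J k).card : ℝ) * Real.log r := fun k =>
      Real.sq_sqrt (by positivity)
    simp_rw [hsq2] at hsq
    rw [← Finset.sum_mul, hsumcard, Finset.card_univ, Fintype.card_fin] at hsq
    have hnn : 0 ≤ ∑ k, Real.sqrt (((J k).card : ℝ) * Real.log r) :=
      Finset.sum_nonneg fun k _ => Real.sqrt_nonneg _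
    have := Real.sqrt_le_sqrt hsq
    rwa [Real.sqrt_sq hnn, ← mul_assoc] at this
  calc (∑ t, ∑ i, x t i * ℓ t (σ i))
      - ∑ k, ∑ t ∈ J k, ∑ s ∈ S k, x t s * ∑ j, q t s j * ℓ t j
      ≤ ∑ k, ((S k).card : ℝ) * Real.sqrt ((J k).card * Real.log ((S k).card)) := hstep
    _ ≤ ∑ k, (r : ℝ) * Real.sqrt ((J k).card * Real.log r) :=
        Finset.sum_le_sum fun k _ => hterm k
    _ = (r : ℝ) * ∑ k, Real.sqrt (((J k).card : ℝ) * Real.log r) := by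
        rw [Finset.mul_sum]
    _ ≤ (r : ℝ) * Real.sqrt ((K : ℝ) * T * Real.log r) := by
        exact mul_le_mul_of_nonneg_left hCS (Nat.cast_nonneg r)
    _ = Real.sqrt ((r : ℝ) ^ 2 * ((K : ℝ) * T * Real.log r)) := by
        rw [Real.sqrt_mul (show (0:ℝ) ≤ (r:ℝ)^2 by positivity) ((K:ℝ) * T * Real.log r),
          Real.sqrt_sq (Nat.cast_nonneg r)]
    _ ≤ Real.sqrt ((r : ℝ) ^ 3 * T * Real.log r) := by
        refine Real.sqrt_le_sqrt ?_
        have hKr' : (K : ℝ) ≤ (r : ℝ) := by exact_mod_cast hKr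
        have hT : (0 : ℝ) ≤ (T : ℝ) := Nat.cast_nonneg _
        have hr0 : (0 : ℝ) ≤ (r : ℝ) := Nat.cast_nonneg _
        have h := mul_le_mul_of_nonneg_right hKr' (mul_nonneg hT hlogr)
        have h2 : (r:ℝ)^2*((K:ℝ)*((T:ℝ)*Real.log r)) ≤ (r:ℝ)^2*((r:ℝ)*((T:ℝ)*Real.log r)) :=
          mul_le_mul_of_nonneg_left h (by positivity)
        nlinarith [h2]
end

section
/- Let N, T ∈ ℕ with N, T ≥ 1, let ε ≥ 0, let A ∈ ℝ^{N×N}, and let x_1,…,x_T, y_1,…,y_T ∈ Δ_N. Define the joint distribution p on [N]×[N] by p(i,j) = (1/T)·∑_{t=1}^T x_t(i)·y_t(j), and set ℓ_t = A y_t ∈ ℝ^N. If the swap regret of x_1,…,x_T with respect to ℓ_1,…,ℓ_T is at most ε·T, then for every map σ : [N] → [N], ∑_{i,j} p(i,j)·A(σ(i),j) ≤ ∑_{i,j} p(i,j)·A(i,j) + ε. (Vanishing swap regret implies the time-averaged joint play is an ε-correlated equilibrium for the corresponding player.) -/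
/-- Vanishing swap regret implies the time-averaged joint play is an
`ε`-correlated equilibrium for the corresponding player: with
`p i j = (1/T) ∑ t, x t i * y t j` and `ℓ t = A *ᵥ y t`, if the swap regret of
the plays `x t` against `ℓ t` is at most `ε * T`, then no swap deviation `σ`
improves the payoff under `p` by more than `ε`. -/
theorem stmt_13 (N T : ℕ) (hN : 1 ≤ N) (hT : 1 ≤ T) (ε : ℝ) (hε : 0 ≤ ε)
    (A : Matrix (Fin N) (Fin N) ℝ)
    (x y : Fin T → Fin N → ℝ)
    (hx : ∀ t, x t ∈ stdSimplex ℝ (Fin N)) (hy : ∀ t, y t ∈ stdSimplex ℝ (Fin N))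
    (p : Fin N → Fin N → ℝ)
    (hp : ∀ i j, p i j = (1 / (T : ℝ)) * ∑ t, x t i * y t j)
    (ℓ : Fin T → Fin N → ℝ) (hℓ : ∀ t, ℓ t = A.mulVec (y t))
    (hswap : ∀ σ : Fin N → Fin N,
      ∑ t, ∑ i, x t i * (ℓ t (σ i) - ℓ t i) ≤ ε * T) :
    ∀ σ : Fin N → Fin N,
      ∑ i, ∑ j, p i j * A (σ i) j ≤ (∑ i, ∑ j, p i j * A i j) + ε := by
  intro σ
  have hT' : (0:ℝ) < T := by exact_mod_cast hT
  have key : ∀ f : Fin N → Fin N,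
      ∑ i, ∑ j, p i j * A (f i) j = (1 / (T : ℝ)) * ∑ t, ∑ i, x t i * ℓ t (f i) := by
    intro f
    have hrow : ∀ i, ∑ j, p i j * A (f i) j = (1 / (T : ℝ)) * ∑ t, x t i * ℓ t (f i) := by
      intro i
      calc ∑ j, p i j * A (f i) j
          = ∑ j, ∑ t, (1 / (T : ℝ)) * (x t i * y t j * A (f i) j) := by
            refine Finset.sum_congr rfl fun j _ => ?_
            rw [hp, Finset.mul_sum, Finset.sum_mul]
            exact Finset.sum_congr rfl fun t _ => by ring
        _ = ∑ t, ∑ j, (1 / (T : ℝ)) * (x t i * y t j * A (f i) j) := by rw [Finset.sum_comm]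
        _ = (1 / (T : ℝ)) * ∑ t, x t i * ℓ t (f i) := by
            rw [Finset.mul_sum]
            refine Finset.sum_congr rfl fun t _ => ?_
            rw [hℓ]
            simp only [Matrix.mulVec, dotProduct, Finset.mul_sum]
            exact Finset.sum_congr rfl fun j _ => by ring
    calc ∑ i, ∑ j, p i j * A (f i) j
        = ∑ i, (1 / (T : ℝ)) * ∑ t, x t i * ℓ t (f i) :=
          Finset.sum_congr rfl fun i _ => hrow i
      _ = (1 / (T : ℝ)) * ∑ i, ∑ t, x t i * ℓ t (f i) := (Finset.mul_sum _ _ _).symm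
      _ = (1 / (T : ℝ)) * ∑ t, ∑ i, x t i * ℓ t (f i) := by rw [Finset.sum_comm]
  have h := hswap σ
  simp only [mul_sub, Finset.sum_sub_distrib] at h
  have h2 : (1 / (T : ℝ)) * ((∑ t, ∑ i, x t i * ℓ t (σ i)) - ∑ t, ∑ i, x t i * ℓ t i)
      ≤ (1 / (T : ℝ)) * (ε * T) := by
    apply mul_le_mul_of_nonneg_left h (by positivity)
  have hc : (1 / (T : ℝ)) * (ε * T) = ε := by field_simp
  have hid : ∑ i, ∑ j, p i j * A i j = (1 / (T : ℝ)) * ∑ t, ∑ i, x t i * ℓ t i :=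
    key (fun i => i)
  rw [key σ, hid]
  nlinarith [h2, hc]
end
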